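/- arXiv:2512.08384 — 4 statements merged into one kernel-verified Lean document; each statement's English description precedes it below -/
import Mathlib

section
/- Every prefix of a feasible assignment is potentially satisfiable: given m constraints (w_k, c_k), k = 1,…,m, if x ∈ {0,1}^n satisfies ∑_S w_k(S) · ∏_{j∈S} x_j ≤ c_k for every k, then for every level 0 ≤ t ≤ n and every k one has F_k(t) ≤ c_k + P_k, i.e., every partial assignment (x₁,…,x_t) obtained from x is potentially satisfiable. -/
/-- The value `∏_{j ∈ S} x_j` of the product of the (0/1-valued) variables
indexed by `S`, for the assignment `x ∈ {0,1}^n`. -/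
def prodVal {n : ℕ} (x : Fin n → Bool) (S : Finset (Fin n)) : ℤ :=
  ∏ j ∈ S, (if x j then (1 : ℤ) else 0)

/-- The variable `y(S)`: equal to `∏_{j ∈ S} x_j` if `w S ≥ 0` and to
`1 - ∏_{j ∈ S} x_j` if `w S < 0`. -/
def yVal {n : ℕ} (w : Finset (Fin n) → ℤ) (x : Fin n → Bool)
    (S : Finset (Fin n)) : ℤ :=
  if 0 ≤ w S then prodVal x S else 1 - prodVal x S

/-- The shift `P = ∑_{S nonempty, w S < 0} |w S|`. -/
def shiftP {n : ℕ} (w : Finset (Fin n) → ℤ) : ℤ :=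
  ∑ S ∈ Finset.univ.filter (fun S : Finset (Fin n) => S.Nonempty ∧ w S < 0), |w S|

/-- `S` is closed at level `t` (with respect to the assignment `x`):
either `max S ≤ t` (every element of `S`, in 1-based indexing, is at most `t`),
or some variable of `S` among the first `t` is assigned `0`. -/
def ClosedAt {n : ℕ} (x : Fin n → Bool) (t : ℕ) (S : Finset (Fin n)) : Prop :=
  (∀ j ∈ S, (j : ℕ) < t) ∨ (∃ j ∈ S, (j : ℕ) < t ∧ x j = false)

instance {n : ℕ} (x : Fin n → Bool) (t : ℕ) : DecidablePred (ClosedAt x t) :=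
  fun S => by unfold ClosedAt; infer_instance

/-- The closed sum `F(t) = ∑_{S nonempty, closed at level t} |w S| · y(S)`. -/
def closedSum {n : ℕ} (w : Finset (Fin n) → ℤ) (x : Fin n → Bool) (t : ℕ) : ℤ :=
  ∑ S ∈ Finset.univ.filter
      (fun S : Finset (Fin n) => S.Nonempty ∧ ClosedAt x t S),
    |w S| * yVal w x S

/-- `Q⁺(u) = ∑_{S : max S = u, w S ≥ 0} |w S| · ∏_{j ∈ S, j ≠ u} x_j`. -/
def Qplus {n : ℕ} (w : Finset (Fin n) → ℤ) (x : Fin n → Bool) (u : Fin n) : ℤ :=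
  ∑ S ∈ Finset.univ.filter
      (fun S : Finset (Fin n) => u ∈ S ∧ (∀ j ∈ S, j ≤ u) ∧ 0 ≤ w S),
    |w S| * ∏ j ∈ S.erase u, (if x j then (1 : ℤ) else 0)

/-- `Q⁻(u) = ∑_{S : u ∈ S, w S < 0} |w S| · ∏_{j ∈ S, j < u} x_j`. -/
def Qminus {n : ℕ} (w : Finset (Fin n) → ℤ) (x : Fin n → Bool) (u : Fin n) : ℤ :=
  ∑ S ∈ Finset.univ.filter
      (fun S : Finset (Fin n) => u ∈ S ∧ w S < 0),
    |w S| * ∏ j ∈ S.filter (fun j => j < u), (if x j then (1 : ℤ) else 0)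

lemma prodVal_nonneg {n : ℕ} (x : Fin n → Bool) (S : Finset (Fin n)) :
    0 ≤ prodVal x S :=
  Finset.prod_nonneg (fun j _ => by split <;> norm_num)

lemma prodVal_le_one {n : ℕ} (x : Fin n → Bool) (S : Finset (Fin n)) :
    prodVal x S ≤ 1 :=
  Finset.prod_le_one (fun j _ => by split <;> norm_num)
    (fun j _ => by split <;> norm_num)

lemma yVal_nonneg {n : ℕ} (w : Finset (Fin n) → ℤ) (x : Fin n → Bool)
    (S : Finset (Fin n)) : 0 ≤ yVal w x S := by
  unfold yVal
  split
  · exact prodVal_nonneg x S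
  · linarith [prodVal_le_one x S]

lemma term_eq {n : ℕ} (w : Finset (Fin n) → ℤ) (x : Fin n → Bool)
    (S : Finset (Fin n)) :
    |w S| * yVal w x S = w S * prodVal x S + (if w S < 0 then |w S| else 0) := by
  unfold yVal
  by_cases h : 0 ≤ w S
  · rw [if_pos h, if_neg (not_lt.mpr h), abs_of_nonneg h]; ring
  · rw [if_neg h, if_pos (lt_of_not_ge h), abs_of_neg (lt_of_not_ge h)]; ring

/-- **Every prefix of a feasible assignment is potentially satisfiable.**
Given `m` constraints `(w_k, c_k)`, if `x ∈ {0,1}^n` satisfies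
`∑_S w_k(S) · ∏_{j∈S} x_j ≤ c_k` for every `k` (sums over nonempty `S`),
then for every level `0 ≤ t ≤ n` and every `k`, `F_k(t) ≤ c_k + P_k`. -/
theorem feasible_prefix_potentially_satisfiable (n m : ℕ)
    (w : Fin m → Finset (Fin n) → ℤ) (c : Fin m → ℤ) (x : Fin n → Bool)
    (hfeas : ∀ k : Fin m,
      (∑ S ∈ Finset.univ.filter (fun S : Finset (Fin n) => S.Nonempty),
        w k S * prodVal x S) ≤ c k) :
    ∀ t : ℕ, t ≤ n → ∀ k : Fin m,
      closedSum (w k) x t ≤ c k + shiftP (w k) := by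
  intro t ht k
  have hle : closedSum (w k) x t ≤
      ∑ S ∈ Finset.univ.filter (fun S : Finset (Fin n) => S.Nonempty),
        |w k S| * yVal (w k) x S := by
    apply Finset.sum_le_sum_of_subset_of_nonneg
    · intro S hS
      simp only [Finset.mem_filter] at hS ⊢
      exact ⟨hS.1, hS.2.1⟩
    · intro S _ _
      exact mul_nonneg (abs_nonneg _) (yVal_nonneg _ _ _)
  have heq : ∑ S ∈ Finset.univ.filter (fun S : Finset (Fin n) => S.Nonempty),
        |w k S| * yVal (w k) x S =
      (∑ S ∈ Finset.univ.filter (fun S : Finset (Fin n) => S.Nonempty),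
        w k S * prodVal x S) + shiftP (w k) := by
    rw [Finset.sum_congr rfl (fun S _ => term_eq (w k) x S), Finset.sum_add_distrib]
    congr 1
    rw [shiftP, Finset.sum_filter, Finset.sum_filter]
    apply Finset.sum_congr rfl
    intro S _
    by_cases h1 : S.Nonempty <;> by_cases h2 : w k S < 0 <;> simp [h1, h2]
  calc closedSum (w k) x t ≤ _ := hle
    _ = _ := heq
    _ ≤ c k + shiftP (w k) := by linarith [hfeas k]
end

section
/- Completeness of the successor checks: given m constraints (w_k, c_k), k = 1,…,m, suppose x ∈ {0,1}^n satisfies ∑_S w_k(S) · ∏_{j∈S} x_j ≤ c_k for every k. Then for every level 0 ≤ t < n and every k: if x_{t+1} = 1 then Q_k⁺(t+1) ≤ c_k + P_k − F_k(t), and if x_{t+1} = 0 then Q_k⁻(t+1) ≤ c_k + P_k − F_k(t). Hence the boolean checks b⁺ (respectively b⁻) of the oracle pass at every level along a feasible assignment, so the oracle generates at least all feasible solutions. -/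
lemma prodVal_eq {n : ℕ} (x : Fin n → Bool) (S : Finset (Fin n)) :
    prodVal x S = if ∀ j ∈ S, x j = true then 1 else 0 := by
  unfold prodVal
  split
  · exact Finset.prod_eq_one (fun j hj => by simp_all)
  · next h =>
    push_neg at h
    obtain ⟨j, hj, hx⟩ := h
    exact Finset.prod_eq_zero hj (by simp [hx])

lemma sum_split {α : Type*} [DecidableEq α] (A B N : Finset α) (f h : α → ℤ)
    (hA : A ⊆ N) (hB : B ⊆ N) (hh : ∀ S ∈ N, 0 ≤ h S)
    (hfh : ∀ S ∈ A, f S ≤ h S) (hAB : ∀ S ∈ A, S ∈ B → f S ≤ 0) :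
    ∑ S ∈ A, f S + ∑ S ∈ B, h S ≤ ∑ S ∈ N, h S := by
  have h1 : ∑ S ∈ A, f S
      = ∑ S ∈ A.filter (· ∉ B), f S + ∑ S ∈ A.filter (· ∈ B), f S := by
    rw [Finset.sum_filter_not_add_sum_filter]
  have h2 : ∑ S ∈ A.filter (· ∈ B), f S ≤ 0 :=
    Finset.sum_nonpos (fun S hS => by
      simp only [Finset.mem_filter] at hS; exact hAB S hS.1 hS.2)
  have h3 : ∑ S ∈ A.filter (· ∉ B), f S ≤ ∑ S ∈ N \ B, h S := by
    refine le_trans (Finset.sum_le_sum (fun S hS => hfh S (Finset.mem_filter.mp hS).1)) ?_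
    refine Finset.sum_le_sum_of_subset_of_nonneg ?_
      (fun S hS _ => hh S (Finset.mem_sdiff.mp hS).1)
    intro S hS
    simp only [Finset.mem_filter, Finset.mem_sdiff] at *
    exact ⟨hA hS.1, hS.2⟩
  have h4 : ∑ S ∈ N \ B, h S + ∑ S ∈ B, h S = ∑ S ∈ N, h S :=
    Finset.sum_sdiff hB
  linarith

lemma total_bound {n : ℕ} (w : Finset (Fin n) → ℤ) (x : Fin n → Bool) :
    ∑ S ∈ Finset.univ.filter (fun S : Finset (Fin n) => S.Nonempty), |w S| * yVal w x S
      = (∑ S ∈ Finset.univ.filter (fun S : Finset (Fin n) => S.Nonempty),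
          w S * prodVal x S) + shiftP w := by
  have hP : shiftP w = ∑ S ∈ Finset.univ.filter (fun S : Finset (Fin n) => S.Nonempty),
      (if w S < 0 then |w S| else 0) := by
    unfold shiftP
    rw [Finset.sum_filter, Finset.sum_filter]
    apply Finset.sum_congr rfl
    intro S _
    by_cases h1 : S.Nonempty <;> by_cases h2 : w S < 0 <;> simp [h1, h2]
  rw [hP, ← Finset.sum_add_distrib]
  apply Finset.sum_congr rfl
  intro S _
  unfold yVal
  by_cases h : 0 ≤ w S
  · rw [if_pos h, if_neg (not_lt.mpr h), abs_of_nonneg h]; ring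
  · rw [if_neg h, if_pos (not_le.mp h), abs_of_neg (not_le.mp h)]; ring

/-- **Completeness of the successor checks.**
Given `m` constraints `(w_k, c_k)`, suppose `x ∈ {0,1}^n` satisfies
`∑_S w_k(S) · ∏_{j∈S} x_j ≤ c_k` for every `k`.  Then for every level
`0 ≤ t < n` and every `k`: if `x_{t+1} = 1` then
`Q_k⁺(t+1) ≤ c_k + P_k − F_k(t)`, and if `x_{t+1} = 0` then
`Q_k⁻(t+1) ≤ c_k + P_k − F_k(t)`.  Hence the boolean checks of the oracle
pass at every level along a feasible assignment. -/
theorem successor_checks_complete (n m : ℕ)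
    (w : Fin m → Finset (Fin n) → ℤ) (c : Fin m → ℤ) (x : Fin n → Bool)
    (hfeas : ∀ k : Fin m,
      (∑ S ∈ Finset.univ.filter (fun S : Finset (Fin n) => S.Nonempty),
        w k S * prodVal x S) ≤ c k) :
    ∀ (t : ℕ) (ht : t < n) (k : Fin m),
      (x ⟨t, ht⟩ = true →
        Qplus (w k) x ⟨t, ht⟩ ≤ c k + shiftP (w k) - closedSum (w k) x t) ∧
      (x ⟨t, ht⟩ = false →
        Qminus (w k) x ⟨t, ht⟩ ≤ c k + shiftP (w k) - closedSum (w k) x t) := by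
  intro t ht k
  have htot : ∑ S ∈ Finset.univ.filter (fun S : Finset (Fin n) => S.Nonempty),
      |w k S| * yVal (w k) x S ≤ c k + shiftP (w k) := by
    rw [total_bound]; linarith [hfeas k]
  set u : Fin n := ⟨t, ht⟩ with hu
  have hBN : Finset.univ.filter
      (fun S : Finset (Fin n) => S.Nonempty ∧ ClosedAt x t S)
      ⊆ Finset.univ.filter (fun S : Finset (Fin n) => S.Nonempty) := by
    intro S hS
    simp only [Finset.mem_filter] at *
    exact ⟨hS.1, hS.2.1⟩
  have hh : ∀ S ∈ Finset.univ.filter (fun S : Finset (Fin n) => S.Nonempty),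
      0 ≤ |w k S| * yVal (w k) x S :=
    fun S _ => mul_nonneg (abs_nonneg _) (yVal_nonneg _ _ _)
  constructor
  · intro hxu
    have key := sum_split
      (Finset.univ.filter (fun S : Finset (Fin n) => u ∈ S ∧ (∀ j ∈ S, j ≤ u) ∧ 0 ≤ w k S))
      (Finset.univ.filter (fun S : Finset (Fin n) => S.Nonempty ∧ ClosedAt x t S))
      (Finset.univ.filter (fun S : Finset (Fin n) => S.Nonempty))
      (fun S => |w k S| * ∏ j ∈ S.erase u, (if x j then (1:ℤ) else 0))
      (fun S => |w k S| * yVal (w k) x S)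
      ?_ hBN hh ?_ ?_
    · have e1 : Qplus (w k) x u = ∑ S ∈ Finset.univ.filter
          (fun S : Finset (Fin n) => u ∈ S ∧ (∀ j ∈ S, j ≤ u) ∧ 0 ≤ w k S),
          |w k S| * ∏ j ∈ S.erase u, (if x j then (1:ℤ) else 0) := rfl
      have e2 : closedSum (w k) x t = ∑ S ∈ Finset.univ.filter
          (fun S : Finset (Fin n) => S.Nonempty ∧ ClosedAt x t S),
          |w k S| * yVal (w k) x S := rfl
      rw [e1, e2] at *
      linarith
    · intro S hS
      simp only [Finset.mem_filter] at *
      exact ⟨hS.1, ⟨u, hS.2.1⟩⟩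
    · intro S hS
      simp only [Finset.mem_filter] at hS
      obtain ⟨-, huS, -, hw⟩ := hS
      have hp : prodVal x S = ∏ j ∈ S.erase u, (if x j then (1:ℤ) else 0) := by
        unfold prodVal
        rw [← Finset.mul_prod_erase S _ huS, hxu, if_pos rfl, one_mul]
      simp only [yVal, if_pos hw, ← hp, le_refl]
    · intro S hS hSB
      simp only [Finset.mem_filter] at hS hSB
      obtain ⟨-, huS, -, -⟩ := hS
      obtain ⟨-, -, hcl⟩ := hSB
      rcases hcl with hall | ⟨j, hjS, hjt, hxj⟩
      · exact absurd (hall u huS) (lt_irrefl t)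
      · have hju : j ≠ u := by
          intro h; rw [h] at hjt; exact absurd hjt (lt_irrefl t)
        have hz : (∏ j ∈ S.erase u, (if x j then (1:ℤ) else 0)) = 0 :=
          Finset.prod_eq_zero (Finset.mem_erase.mpr ⟨hju, hjS⟩) (by simp [hxj])
        simp only [hz, mul_zero, le_refl]
  · intro hxu
    have key := sum_split
      (Finset.univ.filter (fun S : Finset (Fin n) => u ∈ S ∧ w k S < 0))
      (Finset.univ.filter (fun S : Finset (Fin n) => S.Nonempty ∧ ClosedAt x t S))
      (Finset.univ.filter (fun S : Finset (Fin n) => S.Nonempty))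
      (fun S => |w k S| * ∏ j ∈ S.filter (fun j => j < u), (if x j then (1:ℤ) else 0))
      (fun S => |w k S| * yVal (w k) x S)
      ?_ hBN hh ?_ ?_
    · have e1 : Qminus (w k) x u = ∑ S ∈ Finset.univ.filter
          (fun S : Finset (Fin n) => u ∈ S ∧ w k S < 0),
          |w k S| * ∏ j ∈ S.filter (fun j => j < u), (if x j then (1:ℤ) else 0) := rfl
      have e2 : closedSum (w k) x t = ∑ S ∈ Finset.univ.filter
          (fun S : Finset (Fin n) => S.Nonempty ∧ ClosedAt x t S),
          |w k S| * yVal (w k) x S := rfl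
      rw [e1, e2] at *
      linarith
    · intro S hS
      simp only [Finset.mem_filter] at *
      exact ⟨hS.1, ⟨u, hS.2.1⟩⟩
    · intro S hS
      simp only [Finset.mem_filter] at hS
      obtain ⟨-, huS, hw⟩ := hS
      have hp : prodVal x S = 0 :=
        Finset.prod_eq_zero huS (by simp [hxu])
      have hy : yVal (w k) x S = 1 := by
        simp only [yVal, if_neg (not_le.mpr hw), hp, sub_zero]
      rw [hy, mul_one]
      calc |w k S| * ∏ j ∈ S.filter (fun j => j < u), (if x j then (1:ℤ) else 0)
          ≤ |w k S| * 1 := by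
            apply mul_le_mul_of_nonneg_left _ (abs_nonneg _)
            exact prodVal_le_one x (S.filter (fun j => j < u))
        _ = |w k S| := mul_one _
    · intro S hS hSB
      simp only [Finset.mem_filter] at hS hSB
      obtain ⟨-, huS, -⟩ := hS
      obtain ⟨-, -, hcl⟩ := hSB
      rcases hcl with hall | ⟨j, hjS, hjt, hxj⟩
      · exact absurd (hall u huS) (lt_irrefl t)
      · have hju : j < u := by rw [Fin.lt_def]; exact hjt
        have hz : (∏ j ∈ S.filter (fun j => j < u), (if x j then (1:ℤ) else 0)) = 0 :=
          Finset.prod_eq_zero (Finset.mem_filter.mpr ⟨hjS, hju⟩) (by simp [hxj])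
        simp only [hz, mul_zero, le_refl]
end

section
/- Monotonicity of potential satisfiability: given m constraints (w_k, c_k), k = 1,…,m, an assignment x ∈ {0,1}^n, and a level 0 ≤ t < n, if the partial assignment (x₁,…,x_{t+1}) is potentially satisfiable (i.e., F_k(t+1) ≤ c_k + P_k for every k), then the partial assignment (x₁,…,x_t) is also potentially satisfiable. In particular, once a partial assignment fails the potential-satisfiability check, no extension of it can pass the check. -/
/-- **Monotonicity of potential satisfiability.**
Given `m` constraints `(w_k, c_k)`, an assignment `x ∈ {0,1}^n` and a level
`0 ≤ t < n`: if the partial assignment `(x₁,…,x_{t+1})` is potentially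
satisfiable (`F_k(t+1) ≤ c_k + P_k` for every `k`), then so is
`(x₁,…,x_t)`.  In particular, once a partial assignment fails the
potential-satisfiability check, no extension of it can pass the check. -/
theorem potential_satisfiability_monotone (n m : ℕ)
    (w : Fin m → Finset (Fin n) → ℤ) (c : Fin m → ℤ) (x : Fin n → Bool)
    (t : ℕ) (ht : t < n)
    (h : ∀ k : Fin m, closedSum (w k) x (t + 1) ≤ c k + shiftP (w k)) :
    ∀ k : Fin m, closedSum (w k) x t ≤ c k + shiftP (w k) := by
  intro k
  refine le_trans ?_ (h k)
  unfold closedSum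
  apply Finset.sum_le_sum_of_subset_of_nonneg
  · intro S hS
    simp only [Finset.mem_filter, Finset.mem_univ, true_and] at *
    refine ⟨hS.1, ?_⟩
    rcases hS.2 with h1 | ⟨j, hj, hjt, hx⟩
    · exact Or.inl (fun j hj => Nat.lt_succ_of_lt (h1 j hj))
    · exact Or.inr ⟨j, hj, Nat.lt_succ_of_lt hjt, hx⟩
  · intro S _ _
    have hp0 : 0 ≤ prodVal x S := Finset.prod_nonneg (fun j _ => by positivity)
    have hp1 : prodVal x S ≤ 1 :=
      Finset.prod_le_one (fun j _ => by positivity) (fun j _ => by split <;> norm_num)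
    have : 0 ≤ yVal (w k) x S := by
      unfold yVal; split
      · exact hp0
      · linarith
    positivity
end

section
/- Lower-bound correctness for product terms with an odd number of negative factors: let w₁,…,w_r be nonzero integers such that the number of indices i with w_i < 0 is odd, and let i₀ be an index with w_{i₀} < 0 and w_{i₀} ≥ w_i for every i with w_i < 0 (the largest negative factor). Then for every ε ∈ {0,1}^r, Π(ε) ≤ ∏_{i ≠ i₀} w_i, and hence for any integer g < 0, g · ∏_{i ≠ i₀} w_i ≤ g · Π(ε); i.e., the lower-bound rule of the LB algorithm returning the product of all remaining factors except the largest negative one is valid in this case. -/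
/-- The subset product `Π(ε) = ∏_{i : ε_i = 1} w_i` (empty product `1`):
the value the product term `∏_i pow(w_i, e_i)` takes for exponents
`e_i = ε_i ∈ {0,1}`. -/
def subsetProd {r : ℕ} (w : Fin r → ℤ) (ε : Fin r → Bool) : ℤ :=
  ∏ i, (if ε i then w i else 1)

private lemma prod_sign_abs {r : ℕ} (w : Fin r → ℤ) (T : Finset (Fin r)) :
    ∏ i ∈ T, w i =
      (-1 : ℤ) ^ (T.filter (fun i => w i < 0)).card * ∏ i ∈ T, |w i| := by
  have h : ∀ i ∈ T, w i = (if w i < 0 then (-1 : ℤ) else 1) * |w i| := by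
    intro i _
    rcases lt_trichotomy (w i) 0 with h | h | h
    · simp [h, abs_of_neg h]
    · simp [h]
    · simp [h, not_lt.mpr h.le, abs_of_pos h]
  rw [Finset.prod_congr rfl h, Finset.prod_mul_distrib]
  congr 1
  rw [← Finset.prod_filter, Finset.prod_const]

/-- **Lower-bound correctness for product terms with an odd number of negative
factors.**  Let `w₁,…,w_r` be nonzero integers with an odd number of negative
entries, and let `i₀` be a largest negative factor (`w i₀ < 0` and
`w i ≤ w i₀` for every `i` with `w i < 0`).  Then for every `ε`,
`Π(ε) ≤ ∏_{i ≠ i₀} w i`, and hence for any integer `g < 0`,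
`g · ∏_{i ≠ i₀} w i ≤ g · Π(ε)`. -/
theorem lb_odd_negatives (r : ℕ) (w : Fin r → ℤ) (hw : ∀ i, w i ≠ 0)
    (hodd : Odd (Finset.univ.filter (fun i => w i < 0)).card)
    (i₀ : Fin r) (hi₀ : w i₀ < 0) (hmax : ∀ i, w i < 0 → w i ≤ w i₀) :
    ∀ ε : Fin r → Bool,
      subsetProd w ε ≤ ∏ i ∈ Finset.univ.erase i₀, w i ∧
      ∀ g : ℤ, g < 0 →
        g * ∏ i ∈ Finset.univ.erase i₀, w i ≤ g * subsetProd w ε := by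
  intro ε
  have habs1 : ∀ i, (1 : ℤ) ≤ |w i| := fun i => Int.one_le_abs (hw i)
  -- the filter over erase i₀ has even card
  have hmem : i₀ ∈ Finset.univ.filter (fun i => w i < 0) := by
    simp [hi₀]
  have hcard : ((Finset.univ.erase i₀).filter (fun i => w i < 0)).card
      = (Finset.univ.filter (fun i => w i < 0)).card - 1 := by
    rw [Finset.filter_erase, Finset.card_erase_of_mem hmem]
  have heven : Even (((Finset.univ.erase i₀).filter (fun i => w i < 0)).card) := by
    rw [hcard]
    exact Nat.Odd.sub_odd hodd odd_one
  have hP : ∏ i ∈ Finset.univ.erase i₀, w i = ∏ i ∈ Finset.univ.erase i₀, |w i| := by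
    rw [prod_sign_abs, heven.neg_one_pow, one_mul]
  set S : Finset (Fin r) := Finset.univ.filter (fun i => ε i) with hS
  have hPi : subsetProd w ε = ∏ i ∈ S, w i := by
    rw [subsetProd, hS, Finset.prod_filter]
  have key : subsetProd w ε ≤ ∏ i ∈ Finset.univ.erase i₀, w i := by
    rw [hPi, hP, prod_sign_abs w S]
    rcases Nat.even_or_odd (S.filter (fun i => w i < 0)).card with hpar | hpar
    · -- even case: find a negative j ∉ S
      rw [hpar.neg_one_pow, one_mul]
      have hssub : S.filter (fun i => w i < 0) ⊂ Finset.univ.filter (fun i => w i < 0) := by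
        refine Finset.ssubset_iff_subset_ne.mpr ⟨Finset.filter_subset_filter _ (Finset.subset_univ _), ?_⟩
        intro h
        rw [h] at hpar
        exact (Nat.not_even_iff_odd.mpr hodd) hpar
      obtain ⟨j, hj1, hj2⟩ := Finset.exists_of_ssubset hssub
      have hjneg : w j < 0 := (Finset.mem_filter.mp hj1).2
      have hjS : j ∉ S := fun h => hj2 (Finset.mem_filter.mpr ⟨h, hjneg⟩)
      have hsub : S ⊆ Finset.univ.erase j := fun x hx =>
        Finset.mem_erase.mpr ⟨fun h => hjS (h ▸ hx), Finset.mem_univ x⟩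
      have step1 : ∏ i ∈ S, |w i| ≤ ∏ i ∈ Finset.univ.erase j, |w i| := by
        rw [← Finset.prod_sdiff hsub]
        have h1 : (1 : ℤ) ≤ ∏ i ∈ (Finset.univ.erase j) \ S, |w i| := by
          calc (1 : ℤ) = ∏ _i ∈ (Finset.univ.erase j) \ S, (1 : ℤ) := by
                rw [Finset.prod_const_one]
            _ ≤ ∏ i ∈ (Finset.univ.erase j) \ S, |w i| :=
                Finset.prod_le_prod (fun _ _ => zero_le_one) (fun i _ => habs1 i)
        have h2 : 0 ≤ ∏ i ∈ S, |w i| := Finset.prod_nonneg fun i _ => abs_nonneg _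
        nlinarith
      have step2 : ∏ i ∈ Finset.univ.erase j, |w i| ≤ ∏ i ∈ Finset.univ.erase i₀, |w i| := by
        have hja : |w i₀| ≤ |w j| := by
          rw [abs_of_neg hi₀, abs_of_neg hjneg]
          exact neg_le_neg (hmax j hjneg)
        have htot : (∏ i ∈ Finset.univ.erase j, |w i|) * |w j|
            = (∏ i ∈ Finset.univ.erase i₀, |w i|) * |w i₀| := by
          rw [Finset.prod_erase_mul Finset.univ _ (Finset.mem_univ j),
            Finset.prod_erase_mul Finset.univ _ (Finset.mem_univ i₀)]
        have hposj : 0 < |w j| := abs_pos.mpr (hw j)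
        have hppos : 0 ≤ ∏ i ∈ Finset.univ.erase i₀, |w i| :=
          Finset.prod_nonneg fun i _ => abs_nonneg _
        have : (∏ i ∈ Finset.univ.erase j, |w i|) * |w j|
            ≤ (∏ i ∈ Finset.univ.erase i₀, |w i|) * |w j| := by
          rw [htot]
          exact mul_le_mul_of_nonneg_left hja hppos
        exact le_of_mul_le_mul_right this hposj
      exact step1.trans step2
    · -- odd case: subset product negative
      rw [hpar.neg_one_pow, neg_one_mul]
      have h1 : 0 ≤ ∏ i ∈ S, |w i| := Finset.prod_nonneg fun i _ => abs_nonneg _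
      have h2 : 0 ≤ ∏ i ∈ Finset.univ.erase i₀, |w i| :=
        Finset.prod_nonneg fun i _ => abs_nonneg _
      linarith
  exact ⟨key, fun g hg => mul_le_mul_of_nonpos_left key hg.le⟩
end
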